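/- Let n ≥ 3, m ≥ 2 and N = nm−m+1. For each k with 1 ≤ k ≤ m−1, the set X_k is a connected component of μ_m(Γ(D_N,1)), and the full subquiver of μ_m(Γ(D_N,1)) induced by X_k, with translation τ^m, is isomorphic as a translation quiver to Γ(A_{n−1}, N). -/

import Mathlib

/-!
Common combinatorial definitions for the translation quivers of
Baur–Marsh, "A geometric description of the m-cluster categories of type Dₙ".

* `DLab` is the type of second coordinates of vertices of a type-`D` translation
  quiver: `DLab.z false` is the label `0`, `DLab.z true` is the label `0̄`, and
  `DLab.pos j` is the (unbarred) label `j ≥ 1`.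
* `DVertex N h` is the vertex set `ℤ/N × {0, 0̄, 1, …, h−2}`.
* `DArrow N h` is the arrow relation of the translation quiver with `N` columns
  and labels `0, 0̄, 1, …, h−2`.
* `DTau N c` is the translation: `(i,j) ↦ (i−1, j̄)` when `i = 0`, `j ∈ {0,0̄}` and
  `c` is odd, and `(i,j) ↦ (i−1,j)` otherwise.

With these conventions, `Γ(D_N, 1)` is `(DVertex N N, DArrow N N, DTau N N)`
and `Γ(D_n, m)` is
`(DVertex (n*m−m+1) n, DArrow (n*m−m+1) n, DTau (n*m−m+1) (n*m))`.
-/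

/-- Labels `0` (= `z false`), `0̄` (= `z true`) and `j ≥ 1` (= `pos j`). -/
inductive DLab : Type
  | z : Bool → DLab
  | pos : ℕ → DLab
deriving DecidableEq

/-- The bar operation on labels: swaps `0` and `0̄`, fixes all other labels. -/
def DLab.bar : DLab → DLab
  | .z b => .z (!b)
  | .pos j => .pos j

/-- The vertex set `ℤ/N × {0, 0̄, 1, …, h−2}`. -/
def DVertex (N h : ℕ) : Set (ZMod N × DLab) :=
  {v | ∀ j : ℕ, v.2 = DLab.pos j → 1 ≤ j ∧ j ≤ h - 2}

/-- The arrows `(i,j) → (i,j−1)` and `(i,j−1) → (i+1,j)` for `1 ≤ j ≤ h−2`,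
together with `(i,1) → (i,0̄)` and `(i,0̄) → (i+1,1)`. -/
inductive DArrow (N h : ℕ) : ZMod N × DLab → ZMod N × DLab → Prop
  | down (i : ZMod N) (j : ℕ) (h1 : 2 ≤ j) (h2 : j ≤ h - 2) :
      DArrow N h (i, DLab.pos j) (i, DLab.pos (j - 1))
  | toZ (i : ZMod N) (b : Bool) :
      DArrow N h (i, DLab.pos 1) (i, DLab.z b)
  | fromZ (i : ZMod N) (b : Bool) :
      DArrow N h (i, DLab.z b) (i + 1, DLab.pos 1)
  | up (i : ZMod N) (j : ℕ) (h1 : 1 ≤ j) (h2 : j + 1 ≤ h - 2) :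
      DArrow N h (i, DLab.pos j) (i + 1, DLab.pos (j + 1))

/-- The translation `τ(i,j) = (i−1, j̄)` if `i = 0`, `j ∈ {0,0̄}` and `c` is odd,
and `τ(i,j) = (i−1, j)` otherwise.  For `Γ(D_N,1)` one takes `c = N`; for
`Γ(D_n,m)` one takes `c = n*m` (and `N = n*m−m+1`). -/
def DTau (N c : ℕ) : ZMod N × DLab → ZMod N × DLab := fun v =>
  match v with
  | (i, DLab.z b) =>
      if i = 0 ∧ c % 2 = 1 then (i - 1, DLab.z (!b)) else (i - 1, DLab.z b)
  | (i, DLab.pos j) => (i - 1, DLab.pos j)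

/-- `p 0 → p 1 → ⋯ → p m` is a path in `Γ(D_N,1)`. -/
def IsPath (N m : ℕ) (p : ℕ → ZMod N × DLab) : Prop :=
  ∀ k, k < m → DArrow N N (p k) (p (k + 1))

/-- `p 0 → p 1 → ⋯ → p m` is a sectional path in `Γ(D_N,1)`:
`τ (p (k+1)) ≠ p (k−1)` for `1 ≤ k ≤ m − 1`. -/
def IsSectional (N m : ℕ) (p : ℕ → ZMod N × DLab) : Prop :=
  IsPath N m p ∧ ∀ k, 1 ≤ k → k + 1 ≤ m → DTau N N (p (k + 1)) ≠ p (k - 1)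

/-- The extra condition defining restricted paths: there is no `1 ≤ k ≤ m−1`
such that for some `r`, `p (k+1) = (r, 0)` and `p (k−1) = (r−1, 0̄)`, or
`p (k+1) = (r, 0̄)` and `p (k−1) = (r−1, 0)`. -/
def NoForbidden (N m : ℕ) (p : ℕ → ZMod N × DLab) : Prop :=
  ¬ ∃ k, 1 ≤ k ∧ k + 1 ≤ m ∧ ∃ r : ZMod N,
      ((p (k + 1) = (r, DLab.z false) ∧ p (k - 1) = (r - 1, DLab.z true)) ∨
       (p (k + 1) = (r, DLab.z true) ∧ p (k - 1) = (r - 1, DLab.z false)))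

/-- `p 0 → p 1 → ⋯ → p m` is a restricted sectional path in `Γ(D_N,1)`. -/
def IsRestricted (N m : ℕ) (p : ℕ → ZMod N × DLab) : Prop :=
  IsSectional N m p ∧ NoForbidden N m p

/-- There is a restricted sectional path of length `m` from `x` to `y` in
`Γ(D_N,1)`; these are exactly the arrows `x → y` of the restricted `m`-th power
`μ_m(Γ(D_N,1))`. -/
def RSPath (N m : ℕ) (x y : ZMod N × DLab) : Prop :=
  ∃ p : ℕ → ZMod N × DLab, IsRestricted N m p ∧ p 0 = x ∧ p m = y

/-- The set `V = {(r,s) : s ∈ {0,0̄} or m ∣ s}` inside the vertex set of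
`Γ(D_N,1)`. -/
def VSet (N m : ℕ) : Set (ZMod N × DLab) :=
  {v | v ∈ DVertex N N ∧ ∀ j : ℕ, v.2 = DLab.pos j → m ∣ j}

/-- The map `σ'` from the vertex set of `Γ(D_n,m)` to the vertex set of
`Γ(D_N,1)`, where `N = n*m−m+1`:  `σ'(i,j) = (i*m, j*m)` if `j ∉ {0,0̄}`, or if
`j ∈ {0,0̄}`, `m` is odd and `n` is even; otherwise, with `i.val` the standard
representative of `i`, `σ'(i,j) = (i*m, j*m)` if `⌊i*m/N⌋` is even and
`σ'(i,j) = (i*m, (j̄)*m)` if `⌊i*m/N⌋` is odd (with the conventions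
`0*m = 0` and `0̄*m = 0̄`). -/
def DSigma (n m : ℕ) : ZMod (n * m - m + 1) × DLab → ZMod (n * m - m + 1) × DLab :=
  fun v =>
    match v with
    | (i, DLab.pos j) => (i * (m : ZMod (n * m - m + 1)), DLab.pos (j * m))
    | (i, DLab.z b) =>
        if m % 2 = 1 ∧ n % 2 = 0 then
          (i * (m : ZMod (n * m - m + 1)), DLab.z b)
        else if (i.val * m) / (n * m - m + 1) % 2 = 0 then
          (i * (m : ZMod (n * m - m + 1)), DLab.z b)
        else
          (i * (m : ZMod (n * m - m + 1)), DLab.z (!b))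

/-- `C` is a connected component of the quiver with arrow relation `A`:
it is nonempty, closed under arrows in both directions, and any two of its
vertices are connected by an unoriented path. -/
def IsConnComponent {α : Type*} (A : α → α → Prop) (C : Set α) : Prop :=
  C.Nonempty ∧ (∀ x ∈ C, ∀ y, (A x y ∨ A y x) → y ∈ C) ∧
    ∀ x ∈ C, ∀ y ∈ C, Relation.ReflTransGen (fun a b => A a b ∨ A b a) x y

/-- The set `X_k = {(i, j) : j ∈ {k, m+k, …, (n−2)m+k}}`. -/
def XSet (N n m k : ℕ) : Set (ZMod N × DLab) :=
  {v | ∃ (i : ZMod N) (l : ℕ), l ≤ n - 2 ∧ v = (i, DLab.pos (l * m + k))}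

/-- Vertex set `ℤ/N × {1, …, h}` of the translation quiver `Γ(A_h, N)`
(the Auslander–Reiten quiver of `D^b(A_h)/τ^N`). -/
def AVertex (N h : ℕ) : Set (ZMod N × ℕ) :=
  {v | 1 ≤ v.2 ∧ v.2 ≤ h}

/-- Arrows of `Γ(A_h, N)`: `(i,j) → (i,j−1)` for `2 ≤ j ≤ h` and
`(i,j) → (i+1,j+1)` for `1 ≤ j ≤ h−1`. -/
inductive AArrow (N h : ℕ) : ZMod N × ℕ → ZMod N × ℕ → Prop
  | down (i : ZMod N) (j : ℕ) (h1 : 2 ≤ j) (h2 : j ≤ h) :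
      AArrow N h (i, j) (i, j - 1)
  | up (i : ZMod N) (j : ℕ) (h1 : 1 ≤ j) (h2 : j + 1 ≤ h) :
      AArrow N h (i, j) (i + 1, j + 1)

/-- Translation of `Γ(A_h, N)`: `(i,j) ↦ (i−1, j)`. -/
def ATau (N : ℕ) (v : ZMod N × ℕ) : ZMod N × ℕ := (v.1 - 1, v.2)

/-- Tagged arcs in the punctured `N`-gon: `TArc.arc i k` is the arc
`D_{i, i+1+k*m}` (for `1 ≤ k ≤ n−2`), and `TArc.tag i b` is the tagged arc
`D_{ii}^+` (for `b = false`) or `D_{ii}^-` (for `b = true`). -/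
inductive TArc (N : ℕ) : Type
  | arc : ZMod N → ℕ → TArc N
  | tag : ZMod N → Bool → TArc N

/-- The set of tagged `m`-arcs: arcs `D_{i,i+1+k*m}` with `1 ≤ k ≤ n−2`
together with all tagged arcs `D_{ii}^±`. -/
def TArcSet (N n : ℕ) : Set (TArc N) :=
  {a | ∀ (i : ZMod N) (k : ℕ), a = TArc.arc i k → 1 ≤ k ∧ k ≤ n - 2}

/-- The `m`-moves between tagged `m`-arcs, i.e. the arrows of `Γ_⊙(n,m)`:
`D_{i,i+1+km} → D_{i,i+1+(k+1)m}` for `1 ≤ k ≤ n−3`;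
`D_{i,i+1+km} → D_{i+m,i+1+km} = D_{i+m,(i+m)+1+(k−1)m}` for `2 ≤ k ≤ n−2`;
`D_{i,i+1+(n−2)m} → D_{ii}^±`; and
`D_{ii}^± → D_{i+m,i} = D_{i+m,(i+m)+1+(n−2)m}`. -/
inductive MMove (N n m : ℕ) : TArc N → TArc N → Prop
  | extend (i : ZMod N) (k : ℕ) (h1 : 1 ≤ k) (h2 : k ≤ n - 3) :
      MMove N n m (TArc.arc i k) (TArc.arc i (k + 1))
  | rotate (i : ZMod N) (k : ℕ) (h1 : 2 ≤ k) (h2 : k ≤ n - 2) :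
      MMove N n m (TArc.arc i k) (TArc.arc (i + (m : ZMod N)) (k - 1))
  | toTag (i : ZMod N) (b : Bool) :
      MMove N n m (TArc.arc i (n - 2)) (TArc.tag i b)
  | fromTag (i : ZMod N) (b : Bool) :
      MMove N n m (TArc.tag i b) (TArc.arc (i + (m : ZMod N)) (n - 2))

/-- The map `τ_m` on tagged `m`-arcs: `D_{i,i+1+km} ↦ D_{i−m,(i−m)+1+km}` and
`D_{ii}^± ↦ D_{i−m,i−m}^±` if `m` is even, `D_{ii}^± ↦ D_{i−m,i−m}^∓` if `m`
is odd. -/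
def TauArc (N m : ℕ) : TArc N → TArc N
  | .arc i k => .arc (i - (m : ZMod N)) k
  | .tag i b => .tag (i - (m : ZMod N)) (if m % 2 = 1 then !b else b)


/-!
In `Γ(D_N,1)` a sectional path cannot turn (a down arrow followed by an up arrow, or an up arrow
followed by a down arrow, violates `τ x_{i+1} ≠ x_{i-1}`), nor pass through a label `0, 0̄` in
its interior. So a sectional path of length `m ≥ 2` between labels `j ≢ 0 (mod m)` is a straight
line, down `(i, j + m) → (i, j)` or up `(i, j) → (i + m, j + m)`. On `X_k` the arrows of
`μ_m(Γ(D_N,1))` are therefore `(i, lm + k) → (i, (l - 1)m + k)` and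
`(i, lm + k) → (i + m, (l + 1)m + k)`: this is `Γ(A_{n-1}, N)` once the first coordinate is
divided by `m`, which is a unit of `ℤ/N` because `m (1 - n) = 1 - N`.
-/

namespace DArrow

variable {N h : ℕ}

lemma eq_of_src_pos {i : ZMod N} {j : ℕ} {w : ZMod N × DLab}
    (hw : DArrow N h (i, .pos j) w) :
    (2 ≤ j ∧ w = (i, .pos (j - 1))) ∨ (j = 1 ∧ ∃ b, w = (i, .z b)) ∨
      (1 ≤ j ∧ w = (i + 1, .pos (j + 1))) := by
  rcases hw with ⟨_, _, h1⟩ | ⟨_, b⟩ | _ | ⟨_, _, h1⟩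
  · exact .inl ⟨h1, rfl⟩
  · exact .inr (.inl ⟨rfl, b, rfl⟩)
  · exact .inr (.inr ⟨h1, rfl⟩)

lemma eq_of_src_z {i : ZMod N} {b : Bool} {w : ZMod N × DLab}
    (hw : DArrow N h (i, .z b) w) : w = (i + 1, .pos 1) := by
  cases hw
  rfl

lemma mem_DVertex (hh : 3 ≤ h) {v w : ZMod N × DLab} (hvw : DArrow N h v w) :
    v ∈ DVertex N h ∧ w ∈ DVertex N h := by
  rcases hvw with ⟨_, _, h1, h2⟩ | _ | _ | ⟨_, _, h1, h2⟩ <;>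
    refine ⟨fun j hj => ?_, fun j hj => ?_⟩ <;> cases hj <;> omega

end DArrow

@[simp]
lemma DTau_pos {N c : ℕ} (i : ZMod N) (j : ℕ) : DTau N c (i, .pos j) = (i - 1, .pos j) := rfl

lemma DTau_iterate_pos {N c : ℕ} (t : ℕ) (i : ZMod N) (j : ℕ) :
    (DTau N c)^[t] (i, .pos j) = (i - t, .pos j) := by
  induction t generalizing i with
  | zero => simp
  | succ t ih =>
    rw [Function.iterate_succ_apply, DTau_pos, ih, Nat.cast_succ, sub_sub, add_comm 1]

lemma IsPath.mem_DVertex {N m t : ℕ} {p : ℕ → ZMod N × DLab} (hp : IsPath N m p)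
    (hN : 3 ≤ N) (hm : 0 < m) (ht : t ≤ m) : p t ∈ DVertex N N := by
  rcases t with _ | t
  · exact ((hp 0 hm).mem_DVertex hN).1
  · exact ((hp t ht).mem_DVertex hN).2

namespace IsSectional

variable {N m t : ℕ} {p : ℕ → ZMod N × DLab} {i : ZMod N} {j : ℕ}

lemma dTau_ne (hp : IsSectional N m p) (ht : t + 2 ≤ m) : DTau N N (p (t + 2)) ≠ p t :=
  hp.2 (t + 1) (by omega) ht

lemma next_of_up (hp : IsSectional N m p) (ht : t + 2 ≤ m) (hj : 1 ≤ j)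
    (h0 : p t = (i, .pos j)) (h1 : p (t + 1) = (i + 1, .pos (j + 1))) :
    p (t + 2) = (i + 1 + 1, .pos (j + 1 + 1)) := by
  have harr := hp.1 (t + 1) (by omega)
  rw [h1] at harr
  rcases harr.eq_of_src_pos with ⟨-, h2⟩ | ⟨hj1, -⟩ | ⟨-, h2⟩
  · refine absurd ?_ (hp.dTau_ne ht)
    rw [h2, h0]
    simp
  · omega
  · exact h2

lemma next_of_down (hp : IsSectional N m p) (ht : t + 2 ≤ m)
    (h0 : p t = (i, .pos (j + 1))) (h1 : p (t + 1) = (i, .pos j)) :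
    (2 ≤ j ∧ p (t + 2) = (i, .pos (j - 1))) ∨ (j = 1 ∧ ∃ b, p (t + 2) = (i, .z b)) := by
  have harr := hp.1 (t + 1) (by omega)
  rw [h1] at harr
  rcases harr.eq_of_src_pos with h2 | h2 | ⟨-, h2⟩
  · exact .inl h2
  · exact .inr h2
  · refine absurd ?_ (hp.dTau_ne ht)
    rw [h2, h0]
    simp

lemma succ_ne_z (hp : IsSectional N m p) (ht : t + 2 ≤ m) (h0 : p t = (i, .pos 1))
    (b : Bool) : p (t + 1) ≠ (i, .z b) := by
  intro h1
  have harr := hp.1 (t + 1) (by omega)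
  rw [h1] at harr
  refine hp.dTau_ne ht ?_
  rw [harr.eq_of_src_z, h0]
  simp

lemma up_chain (hp : IsSectional N m p) {s : ℕ} (hj : 1 ≤ j) (h0 : p s = (i, .pos j))
    (h1 : p (s + 1) = (i + 1, .pos (j + 1))) (ht : s + t ≤ m) :
    p (s + t) = (i + t, .pos (j + t)) := by
  have key : ∀ t, s + t + 1 ≤ m →
      p (s + t) = (i + t, .pos (j + t)) ∧ p (s + t + 1) = (i + t + 1, .pos (j + t + 1)) := by
    intro t
    induction t with
    | zero => intro _; simpa using ⟨h0, h1⟩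
    | succ t ih =>
      intro ht
      obtain ⟨ha, hb⟩ := ih (by omega)
      have hc := hp.next_of_up (by omega) (by omega) ha hb
      simp only [Nat.cast_succ, ← add_assoc]
      exact ⟨hb, hc⟩
  rcases t with _ | t
  · simpa using h0
  · simpa [Nat.cast_succ, ← add_assoc] using (key t (by omega)).2

lemma down_chain (hp : IsSectional N m p) (hm : 0 < m) (hj : 2 ≤ j) (h0 : p 0 = (i, .pos j))
    (h1 : p 1 = (i, .pos (j - 1))) :
    (m < j ∧ p m = (i, .pos (j - m))) ∨ (j = m ∧ ∃ b, p m = (i, .z b)) := by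
  have key : ∀ t, t + 1 ≤ m → t + 1 < j →
      p t = (i, .pos (j - t)) ∧ p (t + 1) = (i, .pos (j - (t + 1))) := by
    intro t
    induction t with
    | zero => intro _ _; exact ⟨h0, h1⟩
    | succ t ih =>
      intro ht htj
      obtain ⟨ha, hb⟩ := ih (by omega) (by omega)
      rw [show j - t = j - (t + 1) + 1 by omega] at ha
      rcases hp.next_of_down (by omega) ha hb with ⟨-, hc⟩ | ⟨hc, -⟩
      · exact ⟨hb, by rw [hc, Nat.sub_sub]⟩
      · omega
  by_cases hmj : m < j
  · obtain ⟨-, hlast⟩ := key (m - 1) (by omega) (by omega)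
    exact .inl ⟨hmj, by rwa [Nat.sub_add_cancel hm] at hlast⟩
  · obtain ⟨ha, hb⟩ := key (j - 2) (by omega) (by omega)
    rw [show j - (j - 2) = 1 + 1 by omega] at ha
    rw [show j - (j - 2 + 1) = 1 by omega] at hb
    rcases hp.next_of_down (by omega) ha hb with ⟨h2, -⟩ | ⟨-, b, hc⟩
    · omega
    · rw [show j - 2 + 2 = j by omega] at hc
      rcases (show j = m ∨ j + 1 ≤ m by omega) with hjm | hjm
      · exact .inr ⟨hjm, b, hjm ▸ hc⟩
      · exact absurd (by rwa [show j - 2 + 1 + 1 = j by omega]) (hp.succ_ne_z (t := j - 2 + 1)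
          (by omega) hb b)

lemma endpoints (hp : IsSectional N m p) (hm : 2 ≤ m) :
    (∃ i j, p 0 = (i, .pos (j + m)) ∧ p m = (i, .pos j)) ∨
    (∃ i j, p 0 = (i, .pos j) ∧ p m = (i + m, .pos (j + m))) ∨
    (∃ i b, p 0 = (i, .pos m) ∧ p m = (i, .z b)) ∨
    (∃ i b, p 0 = (i, .z b) ∧ ((∃ i' b', p m = (i', .z b')) ∨ p m = (i + m, .pos m))) := by
  have harr0 := hp.1 0 (by omega)
  rcases h0 : p 0 with ⟨i, b | j⟩ <;> rw [h0] at harr0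
  · have h1 := harr0.eq_of_src_z
    have harr1 := hp.1 1 (by omega)
    rw [h1] at harr1
    refine .inr (.inr (.inr ⟨i, b, rfl, ?_⟩))
    rcases harr1.eq_of_src_pos with ⟨h, -⟩ | ⟨-, b', h2⟩ | ⟨-, h2⟩
    · omega
    · rcases (show m = 2 ∨ 3 ≤ m by omega) with rfl | hm3
      · exact .inl ⟨_, b', h2⟩
      · exact absurd h2 (hp.succ_ne_z (t := 1) hm3 h1 b')
    · have := hp.up_chain (s := 1) le_rfl h1 h2 (t := m - 1) (by omega)
      rw [Nat.add_sub_cancel' (by omega), Nat.cast_sub (by omega)] at this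
      exact .inr (by simpa [add_sub_cancel, add_assoc] using this)
  · rcases harr0.eq_of_src_pos with ⟨hj, h1⟩ | ⟨rfl, b, h1⟩ | ⟨hj, h1⟩
    · rcases hp.down_chain (by omega) hj h0 h1 with ⟨hmj, hlast⟩ | ⟨rfl, b, hlast⟩
      · exact .inl ⟨i, j - m, by rw [Nat.sub_add_cancel hmj.le], hlast⟩
      · exact .inr (.inr (.inl ⟨i, b, rfl, hlast⟩))
    · exact absurd h1 (hp.succ_ne_z (t := 0) hm h0 b)
    · have hlast := hp.up_chain (s := 0) hj h0 h1 (t := m) (by omega)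
      exact .inr (.inl ⟨i, j, rfl, by simpa using hlast⟩)

lemma isRestricted_of_forall_pos (hp : IsSectional N m p) (hpos : ∀ t, ∃ j, (p t).2 = .pos j) :
    IsRestricted N m p := by
  refine ⟨hp, ?_⟩
  rintro ⟨t, -, -, r, ⟨h, -⟩ | ⟨h, -⟩⟩ <;>
  · obtain ⟨j, hj⟩ := hpos (t + 1)
    simp [h] at hj

end IsSectional

lemma rspath_down {N m j : ℕ} (hj : 1 ≤ j) (hjN : j + m ≤ N - 2) (i : ZMod N) :
    RSPath N m (i, .pos (j + m)) (i, .pos j) := by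
  refine ⟨fun t => (i, .pos (j + m - t)), IsSectional.isRestricted_of_forall_pos ⟨?_, ?_⟩
    (fun t => ⟨_, rfl⟩), by simp, by simp⟩
  · intro t ht
    simp only [← Nat.sub_sub]
    exact .down i _ (by omega) (by omega)
  · intro t ht1 ht2 heq
    simp only [DTau_pos, Prod.mk.injEq, DLab.pos.injEq] at heq
    omega

lemma rspath_up {N m j : ℕ} (hj : 1 ≤ j) (hjN : j + m ≤ N - 2) (i : ZMod N) :
    RSPath N m (i, .pos j) (i + m, .pos (j + m)) := by
  refine ⟨fun t => (i + t, .pos (j + t)), IsSectional.isRestricted_of_forall_pos ⟨?_, ?_⟩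
    (fun t => ⟨_, rfl⟩), by simp, rfl⟩
  · intro t ht
    simp only [Nat.cast_succ, ← add_assoc]
    exact .up _ _ (by omega) (by omega)
  · intro t ht1 ht2 heq
    simp only [DTau_pos, Prod.mk.injEq, DLab.pos.injEq] at heq
    omega

lemma IsConnComponent.of_forall_reach {α : Type*} {A : α → α → Prop} {C : Set α} {x₀ : α}
    (hx₀ : x₀ ∈ C) (hclosed : ∀ x ∈ C, ∀ y, (A x y ∨ A y x) → y ∈ C)
    (hreach : ∀ x ∈ C, Relation.ReflTransGen (fun a b => A a b ∨ A b a) x x₀) :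
    IsConnComponent A C := by
  have : Std.Symm (fun a b => A a b ∨ A b a) := ⟨fun _ _ h => h.symm⟩
  exact ⟨⟨x₀, hx₀⟩, hclosed, fun x hx y hy =>
    (hreach x hx).trans (Std.Symm.symm _ _ (hreach y hy))⟩

lemma natCast_mul_one_sub_eq_one {n m N : ℕ} (hn : 1 ≤ n) (hN : N = (n - 1) * m + 1) :
    (m : ZMod N) * (1 - n) = 1 := by
  have h : (((n - 1) * m + 1 : ℕ) : ZMod N) = 0 := by rw [← hN, ZMod.natCast_self]
  push_cast [Nat.cast_sub hn] at h
  linear_combination -h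

lemma aArrow_iff {N h : ℕ} {a a' : ZMod N} {r r' : ℕ} :
    AArrow N h (a, r) (a', r') ↔
      (2 ≤ r ∧ r ≤ h ∧ a' = a ∧ r' = r - 1) ∨
      (1 ≤ r ∧ r + 1 ≤ h ∧ a' = a + 1 ∧ r' = r + 1) := by
  constructor
  · rintro (⟨_, _, h1, h2⟩ | ⟨_, _, h1, h2⟩)
    · exact .inl ⟨h1, h2, rfl, rfl⟩
    · exact .inr ⟨h1, h2, rfl, rfl⟩
  · rintro (⟨h1, h2, rfl, rfl⟩ | ⟨h1, h2, rfl, rfl⟩)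
    · exact .down _ _ h1 h2
    · exact .up _ _ h1 h2

lemma exists_succ_of_add_eq_mul_add {m j k l : ℕ} (hk : k < m) (h : j + m = l * m + k) :
    ∃ l', l = l' + 1 ∧ j = l' * m + k := by
  rcases l with _ | l
  · omega
  · exact ⟨l, rfl, by rw [Nat.succ_mul] at h; omega⟩

lemma mul_add_ne_self {m k l : ℕ} (hk1 : 1 ≤ k) (hk2 : k < m) : l * m + k ≠ m := by
  rcases l with _ | l
  · omega
  · rw [Nat.succ_mul]; omega

lemma mul_add_le_sub_two_iff {n m N k l : ℕ} (hn : 2 ≤ n) (hN : N = (n - 1) * m + 1)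
    (hk1 : 1 ≤ k) (hk2 : k < m) : l * m + k ≤ N - 2 ↔ l ≤ n - 2 := by
  subst hN
  constructor
  · intro h
    have : l * m < (n - 1) * m := by generalize (n - 1) * m = M at h ⊢; omega
    have := lt_of_mul_lt_mul_right this
    omega
  · intro h
    have : (l + 1) * m ≤ (n - 1) * m := Nat.mul_le_mul_right _ (by omega)
    rw [Nat.succ_mul] at this
    generalize (n - 1) * m = M at this ⊢
    omega

lemma three_le_of_eq_mul_add_one {n m N : ℕ} (hn : 2 ≤ n) (hm : 2 ≤ m)
    (hN : N = (n - 1) * m + 1) : 3 ≤ N := by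
  have : m ≤ (n - 1) * m := Nat.le_mul_of_pos_left m (by omega)
  omega

/-- Inverse, on `X_k`, of `(a, r) ↦ (a * m, (r - 1) * m + k)`: in `ZMod N` the inverse of `m`
is `1 - n`, since `m * (1 - n) = 1 - N`. The value at the labels `0, 0̄` is irrelevant. -/
def xCoord (N n m : ℕ) : ZMod N × DLab → ZMod N × ℕ
  | (i, .pos j) => (i * (1 - n), j / m + 1)
  | (i, .z _) => (i * (1 - n), 0)

section XSet

variable {n m N k : ℕ}

lemma rspath_XSet_iff (hn : 2 ≤ n) (hm : 2 ≤ m) (hN : N = (n - 1) * m + 1) (hk1 : 1 ≤ k)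
    (hk2 : k < m) {i : ZMod N} {l : ℕ} (hl : l ≤ n - 2) {y : ZMod N × DLab} :
    RSPath N m (i, .pos (l * m + k)) y ↔
      (∃ l', l = l' + 1 ∧ y = (i, .pos (l' * m + k))) ∨
      (l + 1 ≤ n - 2 ∧ y = (i + m, .pos ((l + 1) * m + k))) := by
  have hsucc : (l + 1) * m + k = l * m + k + m := by ring
  constructor
  · rintro ⟨p, hp, hp0, rfl⟩
    rcases hp.1.endpoints hm with ⟨i', j, h0, hlast⟩ | ⟨i', j, h0, hlast⟩ |
      ⟨i', b, h0, -⟩ | ⟨i', b, h0, -⟩ <;>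
      rw [hp0] at h0 <;>
      simp only [Prod.mk.injEq, DLab.pos.injEq, reduceCtorEq, and_false] at h0
    · obtain ⟨rfl, hj⟩ := h0
      obtain ⟨l', rfl, rfl⟩ := exists_succ_of_add_eq_mul_add hk2 hj.symm
      exact .inl ⟨l', rfl, hlast⟩
    · obtain ⟨rfl, rfl⟩ := h0
      have hbound := hp.1.1.mem_DVertex (three_le_of_eq_mul_add_one hn hm hN) (by omega)
        le_rfl _ (by rw [hlast])
      rw [← hsucc, mul_add_le_sub_two_iff hn hN hk1 hk2] at hbound
      exact .inr ⟨hbound.2, by rw [hlast, hsucc]⟩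
    · exact absurd h0.2 (mul_add_ne_self hk1 hk2)
  · rintro (⟨l', rfl, rfl⟩ | ⟨hl', rfl⟩)
    · have hbound := (mul_add_le_sub_two_iff hn hN hk1 hk2).2 hl
      rw [Nat.succ_mul, add_right_comm] at hbound ⊢
      exact rspath_down (by omega) hbound i
    · rw [hsucc]
      exact rspath_up (by omega) (hsucc ▸ (mul_add_le_sub_two_iff hn hN hk1 hk2).2 hl') i

lemma mem_XSet_of_rspath (hn : 2 ≤ n) (hm : 2 ≤ m) (hN : N = (n - 1) * m + 1) (hk1 : 1 ≤ k)
    (hk2 : k < m) {i : ZMod N} {l : ℕ} (hl : l ≤ n - 2) {y : ZMod N × DLab}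
    (hy : RSPath N m y (i, .pos (l * m + k))) : y ∈ XSet N n m k := by
  obtain ⟨p, hp, rfl, hpm⟩ := hy
  rcases hp.1.endpoints hm with ⟨i', j, h0, hlast⟩ | ⟨i', j, h0, hlast⟩ |
    ⟨i', b, -, hlast⟩ | ⟨i', b, -, ⟨i'', b', hlast⟩ | hlast⟩ <;>
    rw [hpm] at hlast <;>
    simp only [Prod.mk.injEq, DLab.pos.injEq, reduceCtorEq, and_false] at hlast
  · obtain ⟨rfl, rfl⟩ := hlast
    have hbound := hp.1.1.mem_DVertex (three_le_of_eq_mul_add_one hn hm hN) (by omega)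
      (Nat.zero_le _) _ (by rw [h0])
    rw [show l * m + k + m = (l + 1) * m + k by ring,
      mul_add_le_sub_two_iff hn hN hk1 hk2] at hbound
    exact ⟨i, l + 1, hbound.2, by rw [h0]; ring_nf⟩
  · obtain ⟨-, hj⟩ := hlast
    obtain ⟨l', rfl, rfl⟩ := exists_succ_of_add_eq_mul_add hk2 hj.symm
    exact ⟨i', l', by omega, h0⟩
  · exact (mul_add_ne_self hk1 hk2 hlast.2).elim

lemma isConnComponent_XSet (hn : 3 ≤ n) (hm : 2 ≤ m) (hN : N = (n - 1) * m + 1)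
    (hk1 : 1 ≤ k) (hk2 : k < m) : IsConnComponent (RSPath N m) (XSet N n m k) := by
  have : NeZero N := ⟨by have := three_le_of_eq_mul_add_one (by omega) hm hN; omega⟩
  set S := Relation.ReflTransGen (fun a b => RSPath N m a b ∨ RSPath N m b a)
  have hdown : ∀ (i : ZMod N) l, l ≤ n - 2 →
      S (i, .pos (l * m + k)) (i, .pos (0 * m + k)) := by
    intro i l
    induction l with
    | zero => exact fun _ => .refl
    | succ l ih =>
      intro hl
      exact .head (.inl ((rspath_XSet_iff (by omega) hm hN hk1 hk2 hl).2 (.inl ⟨l, rfl, rfl⟩)))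
        (ih (by omega))
  have hshift : ∀ i : ZMod N, S (i + m, .pos (0 * m + k)) (i, .pos (0 * m + k)) := fun i =>
    .head (.inr ((rspath_XSet_iff (l := 1) (by omega) hm hN hk1 hk2 (by omega)).2
      (.inl ⟨0, rfl, rfl⟩)))
      (.single (.inr ((rspath_XSet_iff (by omega) hm hN hk1 hk2 (Nat.zero_le _)).2
        (.inr ⟨by omega, rfl⟩))))
  have hcolumn : ∀ d : ℕ, S ((d : ZMod N) * m, .pos (0 * m + k)) (0, .pos (0 * m + k)) := by
    intro d
    induction d with
    | zero => simpa using Relation.ReflTransGen.refl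
    | succ d ih =>
      have h := hshift ((d : ZMod N) * m)
      rw [← add_one_mul, ← Nat.cast_succ] at h
      exact h.trans ih
  refine .of_forall_reach ⟨0, 0, Nat.zero_le _, rfl⟩ ?_ ?_
  · rintro _ ⟨i, l, hl, rfl⟩ y (hy | hy)
    · rcases (rspath_XSet_iff (by omega) hm hN hk1 hk2 hl).1 hy with
        ⟨l', rfl, rfl⟩ | ⟨hl', rfl⟩
      · exact ⟨i, l', by omega, rfl⟩
      · exact ⟨_, l + 1, hl', rfl⟩
    · exact mem_XSet_of_rspath (by omega) hm hN hk1 hk2 hl hy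
  · rintro _ ⟨i, l, hl, rfl⟩
    have hi : (((i * (1 - n)).val : ℕ) : ZMod N) * m = i := by
      rw [ZMod.natCast_zmod_val, mul_assoc, mul_comm _ (m : ZMod N),
        natCast_mul_one_sub_eq_one (by omega) hN, mul_one]
    exact (hdown i l hl).trans (hi ▸ hcolumn _)

lemma xCoord_apply (hk2 : k < m) (i : ZMod N) (l : ℕ) :
    xCoord N n m (i, .pos (l * m + k)) = (i * (1 - n), l + 1) := by
  rw [xCoord, Nat.add_comm (l * m), Nat.add_mul_div_right _ _ (by omega), Nat.div_eq_of_lt hk2,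
    zero_add]

lemma bijOn_xCoord (hn : 2 ≤ n) (hN : N = (n - 1) * m + 1) (hk2 : k < m) :
    Set.BijOn (xCoord N n m) (XSet N n m k) (AVertex N (n - 1)) := by
  have hu := natCast_mul_one_sub_eq_one (by omega) hN
  refine ⟨?_, ?_, ?_⟩
  · rintro _ ⟨i, l, hl, rfl⟩
    rw [xCoord_apply hk2]
    exact ⟨by omega, by omega⟩
  · rintro _ ⟨i, l, -, rfl⟩ _ ⟨i', l', -, rfl⟩ h
    rw [xCoord_apply hk2, xCoord_apply hk2, Prod.mk.injEq,
      (IsUnit.of_mul_eq_one_right _ hu).mul_left_inj] at h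
    rw [h.1, Nat.succ_injective h.2]
  · rintro ⟨a, r⟩ ⟨h1, h2⟩
    refine ⟨(a * m, .pos ((r - 1) * m + k)), ⟨_, r - 1, by omega, rfl⟩, ?_⟩
    rw [xCoord_apply hk2, mul_assoc, hu, mul_one, Nat.sub_add_cancel h1]

lemma rspath_iff_aArrow_xCoord (hn : 2 ≤ n) (hm : 2 ≤ m) (hN : N = (n - 1) * m + 1)
    (hk1 : 1 ≤ k) (hk2 : k < m) {i i' : ZMod N} {l l' : ℕ} (hl : l ≤ n - 2) :
    RSPath N m (i, .pos (l * m + k)) (i', .pos (l' * m + k)) ↔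
      AArrow N (n - 1) (xCoord N n m (i, .pos (l * m + k)))
        (xCoord N n m (i', .pos (l' * m + k))) := by
  have hu := natCast_mul_one_sub_eq_one (by omega) hN
  have hunit := IsUnit.of_mul_eq_one_right _ hu
  have hshift : i * (1 - n) + 1 = (i + m) * (1 - n) := by rw [add_mul, hu]
  rw [rspath_XSet_iff hn hm hN hk1 hk2 hl, xCoord_apply hk2, xCoord_apply hk2, aArrow_iff,
    hshift, hunit.mul_left_inj, hunit.mul_left_inj]
  simp only [Prod.mk.injEq, DLab.pos.injEq, add_left_inj, Nat.mul_left_inj (by omega : m ≠ 0)]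
  constructor
  · rintro (⟨l'', rfl, rfl, rfl⟩ | ⟨hl', rfl, rfl⟩)
    · exact .inl ⟨by omega, by omega, rfl, rfl⟩
    · exact .inr ⟨by omega, by omega, rfl, rfl⟩
  · rintro (⟨h1, -, rfl, h2⟩ | ⟨-, h1, rfl, h2⟩)
    · exact .inl ⟨l', by omega, rfl, rfl⟩
    · exact .inr ⟨by omega, rfl, by omega⟩

lemma xCoord_DTau_iterate (hn : 1 ≤ n) (hN : N = (n - 1) * m + 1) (hk2 : k < m) (i : ZMod N)
    (l : ℕ) : xCoord N n m ((DTau N N)^[m] (i, .pos (l * m + k))) =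
      ATau N (xCoord N n m (i, .pos (l * m + k))) := by
  rw [DTau_iterate_pos, xCoord_apply hk2, xCoord_apply hk2, ATau, sub_mul,
    natCast_mul_one_sub_eq_one hn hN]

end XSet

/-- For `n ≥ 3`, `m ≥ 2`, `N = n*m−m+1` and `1 ≤ k ≤ m−1`,
the set `X_k` is a connected component of `μ_m(Γ(D_N,1))`, and the full
subquiver induced by `X_k`, with translation `τ^m`, is isomorphic as a
translation quiver to `Γ(A_{n−1}, N)`. -/
theorem X_k_component_iso_A_type (n m N k : ℕ) (hn : 3 ≤ n) (hm : 2 ≤ m)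
    (hN : N = n * m - m + 1) (hk1 : 1 ≤ k) (hk2 : k ≤ m - 1) :
    IsConnComponent (RSPath N m) (XSet N n m k) ∧
    ∃ φ : ZMod N × DLab → ZMod N × ℕ,
      Set.BijOn φ (XSet N n m k) (AVertex N (n - 1)) ∧
      (∀ x ∈ XSet N n m k, ∀ y ∈ XSet N n m k,
        (RSPath N m x y ↔ AArrow N (n - 1) (φ x) (φ y))) ∧
      ∀ x ∈ XSet N n m k, φ ((DTau N N)^[m] x) = ATau N (φ x) := by
  have hN' : N = (n - 1) * m + 1 := by rw [hN, Nat.sub_one_mul]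
  have hk : k < m := by omega
  refine ⟨isConnComponent_XSet hn hm hN' hk1 hk, xCoord N n m,
    bijOn_xCoord (by omega) hN' hk, ?_, ?_⟩
  · rintro _ ⟨i, l, hl, rfl⟩ _ ⟨i', l', -, rfl⟩
    exact rspath_iff_aArrow_xCoord (by omega) hm hN' hk1 hk hl
  · rintro _ ⟨i, l, -, rfl⟩
    exact xCoord_DTau_iterate (by omega) hN' hk i l
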